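/- arXiv:2012.05404 — 2 statements merged into one kernel-verified Lean document; each statement's English description precedes it below -/
import Mathlib

section
/- Let 𝒜 be the family of elements Σ_{i=1}^{a₁} z_i ⊗ (p̃¹_{si}·z_j) ∈ V₁⊗V₂ for 1 ≤ j ≤ a₁ and 1 ≤ s ≤ a₁²−q₁₁. Then span_k 𝒜 ⊆ V₁ ⊗ (V₁·V₁), and dim_k(span_k 𝒜) + b = a₁q₁₁ (equivalently, b = a₁q₁₁ − dim_k span_k 𝒜). -/
open TensorProduct

set_option synthInstance.maxHeartbeats 1000000
set_option maxHeartbeats 1000000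

/-- The quotient of a module by a submodule, as a type (with its canonical instances). -/
def ModQuot {k M : Type*} [Field k] [AddCommGroup M] [Module k M]
    (S : Submodule k M) : Type _ := M ⧸ S

noncomputable instance ModQuot.instAddCommGroup {k M : Type*} [Field k] [AddCommGroup M]
    [Module k M] (S : Submodule k M) : AddCommGroup (ModQuot S) :=
  inferInstanceAs (AddCommGroup (M ⧸ S))

noncomputable instance ModQuot.instModule {k M : Type*} [Field k] [AddCommGroup M]
    [Module k M] (S : Submodule k M) : Module k (ModQuot S) :=
  inferInstanceAs (Module k (M ⧸ S))

/-- The `k`-dimension of a subspace of a `k`-vector space. -/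
noncomputable def SubmoduleDim {k M : Type*} [Field k] [AddCommGroup M] [Module k M]
    (S : Submodule k M) : ℕ := Module.finrank k ↥S

/-!
Write `μ : V₁ ⊗ V₁ → V₁·V₁` for the (surjective) multiplication; then `ψ` has the components
`μ ⊗ 1` and `(1 ⊗ μ) ∘ assoc`. As the first one is onto, `rank ψ = dim ((V₁·V₁) ⊗ V₁) + d`, where
`d` is the dimension of the image of `ker (μ ⊗ 1)` under the second component, so that
`b = dim (V₁ ⊗ V₁·V₁) - d = a₁q₁₁ - d`. By right exactness of `- ⊗ V₁`, `ker (μ ⊗ 1)` is spanned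
by the `(Σᵢ zᵢ ⊗ p̃_{si}) ⊗ z_j`, whose images are the elements of `𝒜` read in `V₁ ⊗ (V₁·V₁)`;
over a field `V₁ ⊗ (V₁·V₁) → V₁ ⊗ V₂` is injective, so `d = dim span 𝒜`.
-/

theorem LinearMap.finrank_range_prod {k M C₁ C₂ : Type*} [DivisionRing k]
    [AddCommMonoid M] [Module k M] [AddCommGroup C₁] [Module k C₁]
    [AddCommGroup C₂] [Module k C₂] [Module.Finite k M]
    (f : M →ₗ[k] C₁) (g : M →ₗ[k] C₂) :
    Module.finrank k (LinearMap.range (f.prod g)) =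
      Module.finrank k (LinearMap.range f) + Module.finrank k ((LinearMap.ker f).map g) := by
  -- `M` is only a monoid so that iterated tensor products, which Mathlib does not
  -- recognise as additive groups, are allowed.
  let := Module.addCommMonoidToAddCommGroup k (M := M)
  have h_prod := (f.prod g).finrank_range_add_finrank_ker
  have h_f := f.finrank_range_add_finrank_ker
  have h_g := (g.domRestrict (LinearMap.ker f)).finrank_range_add_finrank_ker
  rw [LinearMap.ker_prod] at h_prod
  rw [LinearMap.range_domRestrict, LinearMap.ker_domRestrict,
    ← Submodule.finrank_map_subtype_eq, Submodule.map_comap_subtype] at h_g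
  omega

theorem LinearMap.finrank_quotient_range_prod_add_finrank_map_ker {k M C₁ C₂ : Type*}
    [DivisionRing k] [AddCommMonoid M] [Module k M] [AddCommGroup C₁] [Module k C₁]
    [AddCommGroup C₂] [Module k C₂] [Module.Finite k M]
    [FiniteDimensional k C₁] [FiniteDimensional k C₂]
    (f : M →ₗ[k] C₁) (g : M →ₗ[k] C₂) (hf : Function.Surjective f) :
    Module.finrank k ((C₁ × C₂) ⧸ LinearMap.range (f.prod g)) +
      Module.finrank k ((LinearMap.ker f).map g) = Module.finrank k C₂ := by
  have h := Submodule.finrank_quotient_add_finrank (LinearMap.range (f.prod g))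
  rw [f.finrank_range_prod g, LinearMap.range_eq_top.mpr hf, finrank_top,
    Module.finrank_prod] at h
  omega

theorem LinearMap.ker_rTensor_eq_span_image2_tmul {R M N Q : Type*} [CommRing R]
    [AddCommGroup M] [Module R M] [AddCommGroup N] [Module R N] [AddCommGroup Q] [Module R Q]
    {f : M →ₗ[R] N} (hf : Function.Surjective f)
    {s : Set M} (hs : Submodule.span R s = LinearMap.ker f)
    {t : Set Q} (ht : Submodule.span R t = ⊤) :
    LinearMap.ker (LinearMap.rTensor Q f) = Submodule.span R (Set.image2 (· ⊗ₜ ·) s t) := by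
  rw [(rTensor_exact Q (LinearMap.exact_subtype_ker_map f) hf).linearMap_ker_eq,
    LinearMap.rTensor, TensorProduct.range_map, Submodule.range_subtype, LinearMap.range_id,
    ← hs, ← ht, Submodule.map₂_span_span]
  rfl

theorem Submodule.lTensor_mulMap'_assoc_sum_tmul {R S ι : Type*} [CommSemiring R] [Semiring S]
    [Algebra R S] (V U W : Submodule R S) (s : Finset ι) (x : ι → V) (y : ι → U) (w : W) :
    LinearMap.lTensor V (U.mulMap' W)
        (TensorProduct.assoc R V U W ((∑ i ∈ s, x i ⊗ₜ y i) ⊗ₜ w)) =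
      ∑ i ∈ s, x i ⊗ₜ (⟨y i * w, Submodule.mul_mem_mul (y i).2 w.2⟩ : ↥(U * W)) := by
  simp only [sum_tmul, map_sum, assoc_tmul, LinearMap.lTensor_tmul]
  rfl

theorem Submodule.ker_eq_ker_mulMap' {R S : Type*} [CommSemiring R] [Semiring S] [Algebra R S]
    {V U W : Submodule R S} (φ : V ⊗[R] U →ₗ[R] W)
    (hφ : ∀ (x : V) (y : U), (φ (x ⊗ₜ y) : S) = x * y) :
    LinearMap.ker φ = LinearMap.ker (V.mulMap' U) := by
  have h : W.subtype ∘ₗ φ = (V * U).subtype ∘ₗ V.mulMap' U := TensorProduct.ext' hφ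
  rw [← LinearMap.ker_comp_of_ker_eq_bot φ W.ker_subtype, h,
    LinearMap.ker_comp_of_ker_eq_bot _ (V * U).ker_subtype]

theorem stmt_4_general {k A : Type*} [Field k] [Ring A] [Algebra k A]
    (V₁ V₂ : Submodule k A)
    (hV11 : V₁ * V₁ ≤ V₂)
    [FiniteDimensional k ↥V₁]
    [FiniteDimensional k ↥(V₁ * V₁)]
    (a₁ q₁₁ b : ℕ)
    (ha₁ : a₁ = Module.finrank k ↥V₁)
    (hq₁₁ : q₁₁ = Module.finrank k ↥(V₁ * V₁))
    (φ₁ : ↥V₁ ⊗[k] ↥V₁ →ₗ[k] ↥V₂)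
    (hφ₁ : ∀ x y : ↥V₁, (φ₁ (x ⊗ₜ[k] y) : A) = (x : A) * (y : A))
    (z : Module.Basis (Fin a₁) k ↥V₁)
    (p : Fin (a₁ ^ 2 - q₁₁) → Fin a₁ → ↥V₁)
    (hpspan : Submodule.span k
        (Set.range (fun s : Fin (a₁ ^ 2 - q₁₁) => ∑ i, z i ⊗ₜ[k] p s i)) =
      LinearMap.ker φ₁)
    (ψ : (↥V₁ ⊗[k] ↥V₁) ⊗[k] ↥V₁ →ₗ[k]
      (↥(V₁ * V₁) ⊗[k] ↥V₁) × (↥V₁ ⊗[k] ↥(V₁ * V₁)))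
    (hψ : ∀ x y w : ↥V₁, ψ ((x ⊗ₜ[k] y) ⊗ₜ[k] w) =
      ((⟨(x : A) * (y : A), Submodule.mul_mem_mul x.2 y.2⟩ : ↥(V₁ * V₁)) ⊗ₜ[k] w,
        x ⊗ₜ[k] (⟨(y : A) * (w : A), Submodule.mul_mem_mul y.2 w.2⟩ : ↥(V₁ * V₁))))
    (hb : b = Module.finrank k (ModQuot (k := k)
      (M := (↥(V₁ * V₁) ⊗[k] ↥V₁) × (↥V₁ ⊗[k] ↥(V₁ * V₁))) (LinearMap.range ψ))) :
    Submodule.span k (Set.range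
        (fun js : Fin a₁ × Fin (a₁ ^ 2 - q₁₁) => ∑ i, z i ⊗ₜ[k]
          (⟨(p js.2 i : A) * (z js.1 : A),
            hV11 (Submodule.mul_mem_mul (p js.2 i).2 (z js.1).2)⟩ : ↥V₂))) ≤
      LinearMap.range (LinearMap.lTensor ↥V₁ (Submodule.inclusion hV11)) ∧
      SubmoduleDim (k := k) (M := ↥V₁ ⊗[k] ↥V₂)
          (Submodule.span k (Set.range
            (fun js : Fin a₁ × Fin (a₁ ^ 2 - q₁₁) => ∑ i, z i ⊗ₜ[k]
              (⟨(p js.2 i : A) * (z js.1 : A),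
                hV11 (Submodule.mul_mem_mul (p js.2 i).2 (z js.1).2)⟩ : ↥V₂)))) + b =
        a₁ * q₁₁ := by
  set 𝒜 := fun js : Fin a₁ × Fin (a₁ ^ 2 - q₁₁) => ∑ i, z i ⊗ₜ[k]
    (⟨(p js.2 i : A) * (z js.1 : A),
      hV11 (Submodule.mul_mem_mul (p js.2 i).2 (z js.1).2)⟩ : ↥V₂)
  set μ := Submodule.mulMap' V₁ V₁
  set ψ₂ := LinearMap.lTensor V₁ μ ∘ₗ (TensorProduct.assoc k V₁ V₁ V₁).toLinearMap
  set ι := LinearMap.lTensor V₁ (Submodule.inclusion hV11)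
  set E : Fin (a₁ ^ 2 - q₁₁) → V₁ ⊗[k] V₁ := fun s => ∑ i, z i ⊗ₜ[k] p s i
  set T := Submodule.span k
    (Set.range fun js : Fin a₁ × Fin (a₁ ^ 2 - q₁₁) => ψ₂ (E js.2 ⊗ₜ z js.1))
  have hker : Submodule.span k (Set.range E) = LinearMap.ker μ :=
    hpspan.trans (Submodule.ker_eq_ker_mulMap' φ₁ hφ₁)
  have hT : (LinearMap.ker (LinearMap.rTensor V₁ μ)).map ψ₂ = T := by
    rw [LinearMap.ker_rTensor_eq_span_image2_tmul (M := V₁ ⊗[k] V₁) (f := μ)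
      (Submodule.mulMap'_surjective V₁ V₁) hker z.span_eq, Submodule.map_span,
      Set.image2_swap, Set.image2_range, ← Set.range_comp]
    rfl
  have h𝒜 : Submodule.span k (Set.range 𝒜) = T.map ι := by
    rw [Submodule.map_span, ← Set.range_comp]
    refine congrArg (fun f => Submodule.span k (Set.range f)) (funext fun js => ?_)
    simp only [𝒜, ι, ψ₂, μ, E, Function.comp_apply, LinearMap.coe_comp, LinearEquiv.coe_coe,
      Submodule.lTensor_mulMap'_assoc_sum_tmul, map_sum, LinearMap.lTensor_tmul]
    rfl
  refine ⟨h𝒜 ▸ LinearMap.map_le_range, ?_⟩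
  have hψ_eq : ψ = (LinearMap.rTensor V₁ μ).prod ψ₂ :=
    TensorProduct.ext_threefold fun x y w => hψ x y w
  have hb_T : b + Module.finrank k T = a₁ * q₁₁ := by
    rw [hb, ← hT, hψ_eq, ha₁, hq₁₁, ← Module.finrank_tensorProduct]
    exact LinearMap.finrank_quotient_range_prod_add_finrank_map_ker
      (M := (V₁ ⊗[k] V₁) ⊗[k] V₁) (C₁ := ↥(V₁ * V₁) ⊗[k] ↥V₁) (C₂ := V₁ ⊗[k] ↥(V₁ * V₁)) _ _
      (LinearMap.rTensor_surjective _ (Submodule.mulMap'_surjective V₁ V₁))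
  rwa [SubmoduleDim, h𝒜, ← (Submodule.equivMapOfInjective ι
    (Module.Flat.lTensor_preserves_injective_linearMap _ (Submodule.inclusion_injective hV11))
    T).finrank_eq, add_comm]

/-- `span 𝒜 ⊆ V₁ ⊗ (V₁·V₁)` (inside `V₁ ⊗ V₂`),
and `dim span 𝒜 + b = a₁q₁₁`, i.e. `b = a₁q₁₁ − dim span 𝒜`. -/
theorem stmt_4 {k A : Type*} [Field k] [Ring A] [Algebra k A]
    (V₁ V₂ V₃ : Submodule k A)
    (hV11 : V₁ * V₁ ≤ V₂) (hV12 : V₁ * V₂ ≤ V₃)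
    [FiniteDimensional k ↥V₁] [FiniteDimensional k ↥V₂] [FiniteDimensional k ↥V₃]
    [FiniteDimensional k ↥(V₁ * V₁)]
    (a₁ q₁₁ b : ℕ)
    (ha₁ : a₁ = Module.finrank k ↥V₁)
    (hq₁₁ : q₁₁ = Module.finrank k ↥(V₁ * V₁))
    (φ₁ : ↥V₁ ⊗[k] ↥V₁ →ₗ[k] ↥V₂)
    (hφ₁ : ∀ x y : ↥V₁, (φ₁ (x ⊗ₜ[k] y) : A) = (x : A) * (y : A))
    (z : Module.Basis (Fin a₁) k ↥V₁)
    (p : Fin (a₁ ^ 2 - q₁₁) → Fin a₁ → ↥V₁)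
    (hpind : LinearIndependent k (fun s : Fin (a₁ ^ 2 - q₁₁) => ∑ i, z i ⊗ₜ[k] p s i))
    (hpspan : Submodule.span k
        (Set.range (fun s : Fin (a₁ ^ 2 - q₁₁) => ∑ i, z i ⊗ₜ[k] p s i)) =
      LinearMap.ker φ₁)
    (ψ : (↥V₁ ⊗[k] ↥V₁) ⊗[k] ↥V₁ →ₗ[k]
      (↥(V₁ * V₁) ⊗[k] ↥V₁) × (↥V₁ ⊗[k] ↥(V₁ * V₁)))
    (hψ : ∀ x y w : ↥V₁, ψ ((x ⊗ₜ[k] y) ⊗ₜ[k] w) =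
      ((⟨(x : A) * (y : A), Submodule.mul_mem_mul x.2 y.2⟩ : ↥(V₁ * V₁)) ⊗ₜ[k] w,
        x ⊗ₜ[k] (⟨(y : A) * (w : A), Submodule.mul_mem_mul y.2 w.2⟩ : ↥(V₁ * V₁))))
    (hb : b = Module.finrank k (ModQuot (k := k)
      (M := (↥(V₁ * V₁) ⊗[k] ↥V₁) × (↥V₁ ⊗[k] ↥(V₁ * V₁))) (LinearMap.range ψ))) :
    Submodule.span k (Set.range
        (fun js : Fin a₁ × Fin (a₁ ^ 2 - q₁₁) => ∑ i, z i ⊗ₜ[k]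
          (⟨(p js.2 i : A) * (z js.1 : A),
            hV11 (Submodule.mul_mem_mul (p js.2 i).2 (z js.1).2)⟩ : ↥V₂))) ≤
      LinearMap.range (LinearMap.lTensor ↥V₁ (Submodule.inclusion hV11)) ∧
      SubmoduleDim (k := k) (M := ↥V₁ ⊗[k] ↥V₂)
          (Submodule.span k (Set.range
            (fun js : Fin a₁ × Fin (a₁ ^ 2 - q₁₁) => ∑ i, z i ⊗ₜ[k]
              (⟨(p js.2 i : A) * (z js.1 : A),
                hV11 (Submodule.mul_mem_mul (p js.2 i).2 (z js.1).2)⟩ : ↥V₂)))) + b =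
        a₁ * q₁₁ :=
  stmt_4_general V₁ V₂ hV11 a₁ q₁₁ b ha₁ hq₁₁ φ₁ hφ₁ z p hpspan ψ hψ hb
end

section
/- Let d ∈ ℤ⟦t⟧ be a power series with constant coefficient 1, and suppose the power series 𝒫 := (1+t)^n·α(t)^{−1} − (1+t)^n·d^{−1} has vanishing coefficients in degrees 0, 1 and 2. Writing 𝒫_i for the coefficient of t^i in 𝒫 and d_i for the coefficient of t^i in d, the following hold: d₁ = 0, d₂ = −a₁, d₃ = −a₂ + 𝒫₃, d₄ = −a₃ + 𝒫₄ − n·𝒫₃, and d₅ = −a₄ + 𝒫₅ − n·𝒫₄ + (n² − C(n,2) − 2a₁)·𝒫₃, where C(n,2) is the binomial coefficient. (Equivalently, d(t) = α(t) + 𝒫₃t³ + (𝒫₄ − n𝒫₃)t⁴ + (𝒫₅ − n𝒫₄ + (n² − C(n,2) − 2a₁)𝒫₃)t⁵ + f(t)t⁶ for some f ∈ ℤ⟦t⟧; in the Koszul setting, where 𝒫₃ = q₁₁, 𝒫₄ = (n+1)q₁₁ + q₁₂ and 𝒫₅ = (C(n+1,2)+2a₁)q₁₁ + (n+1)q₁₂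 + a − b, this yields d(t) = α(t) + q₁₁t³ + (q₁₁+q₁₂)t⁴ + (q₁₂ − b + a)t⁵ + f(t)t⁶, which is the content of Proposition 4.4.) -/
/-!
Since `B * α = (1 + t)ⁿ = v * d`, the series `e := d - α` satisfies `v * e = 𝒫 * α`. As `𝒫 = t³ Q`
and `v` is a unit, `e = t³ E` with `v * E = Q * α`, so `d₃, d₄, d₅` exceed `α₃, α₄, α₅` by the
first three coefficients of `E = Q * α * v⁻¹`. These only involve `v₀, v₁, v₂`, which agree with
`B₀ = 1`, `B₁ = n`, `B₂ = C(n,2) + a₁` because `𝒫₀ = 𝒫₁ = 𝒫₂ = 0`.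
-/

open PowerSeries

namespace PowerSeries

variable {R : Type*}

theorem coeff_one_add_X_pow [CommSemiring R] (n m : ℕ) :
    coeff m ((1 + X : R⟦X⟧) ^ n) = n.choose m := by
  have : (1 + X : R⟦X⟧) ^ n = ((1 + Polynomial.X) ^ n : Polynomial R) := by push_cast; ring
  rw [this, Polynomial.coeff_coe, Polynomial.coeff_one_add_X_pow]

theorem coeff_two_mul [Semiring R] (φ ψ : R⟦X⟧) :
    coeff 2 (φ * ψ) =
      constantCoeff φ * coeff 2 ψ + coeff 1 φ * coeff 1 ψ + coeff 2 φ * constantCoeff ψ := by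
  simp [coeff_mul, Finset.Nat.antidiagonal_succ, add_assoc]

theorem coeff_le_two_of_mul_eq_one_add_X_pow [CommRing R] {φ ψ : R⟦X⟧} {n : ℕ} {c : R}
    (hψ0 : constantCoeff ψ = 1) (hψ1 : coeff 1 ψ = 0) (hψ2 : coeff 2 ψ = c)
    (h : φ * ψ = (1 + X) ^ n) :
    constantCoeff φ = 1 ∧ coeff 1 φ = n ∧ coeff 2 φ = n.choose 2 - c := by
  have h0 : constantCoeff φ = 1 := by simpa [hψ0] using congrArg constantCoeff h
  refine ⟨h0, ?_, ?_⟩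
  · simpa [coeff_one_mul, coeff_one_add_X_pow, hψ0, hψ1] using congrArg (coeff 1) h
  · have h2 := congrArg (coeff 2) h
    simp only [coeff_two_mul, coeff_one_add_X_pow, h0, hψ0, hψ1, hψ2] at h2
    linear_combination h2

end PowerSeries

theorem IsUnit.exists_sub_eq_mul_of_mul_eq_mul {R : Type*} [CommRing R] {a b d v x q : R}
    (hv : IsUnit v) (h : b * a = v * d) (hq : b - v = x * q) :
    ∃ e, d - a = x * e ∧ v * e = q * a := by
  obtain ⟨w, rfl⟩ := hv
  refine ⟨↑w⁻¹ * (q * a), ?_, by simp⟩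
  calc d - a = ↑w⁻¹ * (↑w * (d - a)) := by simp
    _ = x * (↑w⁻¹ * (q * a)) := by rw [mul_sub, ← h, ← sub_mul, hq]; ring

theorem stmt_12_general (n : ℕ) (a : ℕ → ℕ)
    (α B d v : PowerSeries ℤ)
    (hα0 : PowerSeries.coeff 0 α = 1)
    (hα1 : PowerSeries.coeff 1 α = 0)
    (hαm : ∀ m, 2 ≤ m → PowerSeries.coeff m α = -(a (m - 1) : ℤ))
    (hB : B * α = (1 + PowerSeries.X) ^ n)
    (hv : v * d = (1 + PowerSeries.X) ^ n)
    (hP0 : PowerSeries.coeff 0 (B - v) = 0)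
    (hP1 : PowerSeries.coeff 1 (B - v) = 0)
    (hP2 : PowerSeries.coeff 2 (B - v) = 0) :
    PowerSeries.coeff 1 d = 0 ∧
      PowerSeries.coeff 2 d = -(a 1 : ℤ) ∧
      PowerSeries.coeff 3 d = -(a 2 : ℤ) + PowerSeries.coeff 3 (B - v) ∧
      PowerSeries.coeff 4 d = -(a 3 : ℤ) + PowerSeries.coeff 4 (B - v) -
        (n : ℤ) * PowerSeries.coeff 3 (B - v) ∧
      PowerSeries.coeff 5 d = -(a 4 : ℤ) + PowerSeries.coeff 5 (B - v) -
        (n : ℤ) * PowerSeries.coeff 4 (B - v) +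
        ((n : ℤ) ^ 2 - (n.choose 2 : ℤ) - 2 * (a 1 : ℤ)) *
          PowerSeries.coeff 3 (B - v) := by
  have hα2 : coeff 2 α = -(a 1 : ℤ) := hαm 2 le_rfl
  rw [coeff_zero_eq_constantCoeff_apply] at hα0 hP0
  simp only [map_sub] at hP0 hP1 hP2
  obtain ⟨hB0, hB1, hB2⟩ := coeff_le_two_of_mul_eq_one_add_X_pow hα0 hα1 hα2 hB
  have hv0 : constantCoeff v = 1 := by linear_combination hB0 - hP0
  have hv1 : coeff 1 v = n := by linear_combination hB1 - hP1
  have hv2 : coeff 2 v = n.choose 2 + a 1 := by linear_combination hB2 - hP2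
  obtain ⟨Q, hQ⟩ : X ^ 3 ∣ B - v := X_pow_dvd_iff.2 fun m hm => by
    interval_cases m <;> simp [coeff_zero_eq_constantCoeff_apply, hP0, hP1, hP2]
  have hv_unit : IsUnit v := isUnit_iff_constantCoeff.2 (by simp [hv0])
  obtain ⟨E, hE, hvE⟩ := hv_unit.exists_sub_eq_mul_of_mul_eq_mul (hB.trans hv.symm) hQ
  have hE0 : constantCoeff E = constantCoeff Q := by
    simpa [hv0, hα0] using congrArg constantCoeff hvE
  have hE1 : coeff 1 E = coeff 1 Q - n * constantCoeff Q := by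
    have h1 := congrArg (coeff 1) hvE
    simp only [coeff_one_mul, hv0, hv1, hα0, hα1] at h1
    linear_combination h1 - n * hE0
  have hE2 := congrArg (coeff 2) hvE
  simp only [coeff_two_mul, hv0, hv1, hv2, hα0, hα1, hα2] at hE2
  rw [eq_add_of_sub_eq' hE, hQ]
  norm_num [coeff_X_pow_mul', hαm]
  refine ⟨hα1, hE0, by linear_combination hE1, ?_⟩
  linear_combination hE2 - n * hE1 - (n.choose 2 + a 1 : ℤ) * hE0

/-- Let `α(t) = 1 − ∑_{j≥1} a_j t^{j+1}` and let `d ∈ ℤ⟦t⟧` have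
constant coefficient `1`. Suppose `𝒫 := (1+t)^n·α(t)⁻¹ − (1+t)^n·d⁻¹ = B − v`
(where `B * α = (1+t)^n` and `v * d = (1+t)^n`) has vanishing coefficients in degrees
`0`, `1`, `2`. Then `d₁ = 0`, `d₂ = −a₁`, `d₃ = −a₂ + 𝒫₃`, `d₄ = −a₃ + 𝒫₄ − n𝒫₃`, and
`d₅ = −a₄ + 𝒫₅ − n𝒫₄ + (n² − C(n,2) − 2a₁)𝒫₃`. -/
theorem stmt_12 (n : ℕ) (a : ℕ → ℕ) (ha0 : a 0 = 0)
    (α B d v : PowerSeries ℤ)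
    (hα0 : PowerSeries.coeff 0 α = 1)
    (hα1 : PowerSeries.coeff 1 α = 0)
    (hαm : ∀ m, 2 ≤ m → PowerSeries.coeff m α = -(a (m - 1) : ℤ))
    (hB : B * α = (1 + PowerSeries.X) ^ n)
    (hd0 : PowerSeries.constantCoeff d = 1)
    (hv : v * d = (1 + PowerSeries.X) ^ n)
    (hP0 : PowerSeries.coeff 0 (B - v) = 0)
    (hP1 : PowerSeries.coeff 1 (B - v) = 0)
    (hP2 : PowerSeries.coeff 2 (B - v) = 0) :
    PowerSeries.coeff 1 d = 0 ∧
      PowerSeries.coeff 2 d = -(a 1 : ℤ) ∧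
      PowerSeries.coeff 3 d = -(a 2 : ℤ) + PowerSeries.coeff 3 (B - v) ∧
      PowerSeries.coeff 4 d = -(a 3 : ℤ) + PowerSeries.coeff 4 (B - v) -
        (n : ℤ) * PowerSeries.coeff 3 (B - v) ∧
      PowerSeries.coeff 5 d = -(a 4 : ℤ) + PowerSeries.coeff 5 (B - v) -
        (n : ℤ) * PowerSeries.coeff 4 (B - v) +
        ((n : ℤ) ^ 2 - (n.choose 2 : ℤ) - 2 * (a 1 : ℤ)) *
          PowerSeries.coeff 3 (B - v) :=
  stmt_12_general n a α B d v hα0 hα1 hαm hB hv hP0 hP1 hP2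
end
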